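/- Let H be a loop-free digraph with s(H) ≤ c, and let H' be a quotient of an arc supergraph of H. Then the reachability hypergraph R(H') has at most c hyperedges, i.e., |E(R(H'))| ≤ c. -/

import Mathlib

noncomputable section

/-! ### Hypergraphs -/

/-- A hypergraph: a vertex set together with a set of nonempty hyperedges. -/
structure Hypergraph' (V : Type) where
  verts : Set V
  edges : Set (Set V)
  edge_nonempty : ∀ e ∈ edges, e.Nonempty
  edge_subset : ∀ e ∈ edges, e ⊆ verts

namespace Hypergraph'

variable {V : Type}

/-- An independent set: no two of its vertices lie in a common hyperedge. -/
def IsIndepSet (H : Hypergraph' V) (I : Set V) : Prop :=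
  I ⊆ H.verts ∧ ∀ u ∈ I, ∀ v ∈ I, u ≠ v → ∀ e ∈ H.edges, ¬(u ∈ e ∧ v ∈ e)

/-- The independence number `α`. -/
def indepNum (H : Hypergraph' V) : ℕ :=
  sSup {n | ∃ I : Set V, H.IsIndepSet I ∧ I.ncard = n}

/-- A fractional independent set: `μ : V(H) → [0,1]` with `∑_{v ∈ e} μ v ≤ 1` for each edge. -/
def IsFracIndep (H : Hypergraph' V) (μ : V → ℝ) : Prop :=
  (∀ v, 0 ≤ μ v ∧ μ v ≤ 1) ∧ (∀ v, v ∉ H.verts → μ v = 0) ∧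
    ∀ e ∈ H.edges, (∑ᶠ v ∈ e, μ v) ≤ 1

/-- The weight of a (fractional independent) vertex-weighting. -/
def weight (H : Hypergraph' V) (μ : V → ℝ) : ℝ := ∑ᶠ v ∈ H.verts, μ v

/-- The fractional independence number `α*`. -/
def fracIndepNum (H : Hypergraph' V) : ℝ :=
  sSup {w | ∃ μ : V → ℝ, H.IsFracIndep μ ∧ H.weight μ = w}

/-- A fractional edge cover of a set `X` of vertices. -/
def IsFracEdgeCover (H : Hypergraph' V) (X : Set V) (γ : Set V → ℝ) : Prop :=
  (∀ e, 0 ≤ γ e) ∧ (∀ e, e ∉ H.edges → γ e = 0) ∧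
    ∀ v ∈ X, 1 ≤ ∑ᶠ e ∈ {e ∈ H.edges | v ∈ e}, γ e

/-- The weight of an edge-weighting. -/
def coverWeight (H : Hypergraph' V) (γ : Set V → ℝ) : ℝ := ∑ᶠ e ∈ H.edges, γ e

/-- `ρ*_H(X)`: the fractional edge cover number of a set `X` of vertices. -/
def fracCoverOf (H : Hypergraph' V) (X : Set V) : ℝ :=
  sInf {w | ∃ γ : Set V → ℝ, H.IsFracEdgeCover X γ ∧ H.coverWeight γ = w}

/-- The fractional edge cover number `ρ*(H)`. -/
def fracEdgeCoverNum (H : Hypergraph' V) : ℝ := H.fracCoverOf H.verts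

/-- A tree decomposition of a hypergraph. -/
structure TreeDecomp (H : Hypergraph' V) where
  n : ℕ
  tree : SimpleGraph (Fin n)
  isTree : tree.IsTree
  bag : Fin n → Set V
  bag_subset : ∀ t, bag t ⊆ H.verts
  verts_covered : ∀ v ∈ H.verts, ∃ t, v ∈ bag t
  edges_covered : ∀ e ∈ H.edges, ∃ t, e ⊆ bag t
  bags_connected : ∀ (v : V) (t₁ t₂ : Fin n) (h₁ : v ∈ bag t₁) (h₂ : v ∈ bag t₂),
    (tree.induce {t | v ∈ bag t}).Reachable ⟨t₁, h₁⟩ ⟨t₂, h₂⟩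

/-- The `μ`-width of a tree decomposition: the maximum `μ`-weight of a bag. -/
def TreeDecomp.muWidth {H : Hypergraph' V} (td : H.TreeDecomp) (μ : V → ℝ) : ℝ :=
  ⨆ t, ∑ᶠ v ∈ td.bag t, μ v

/-- The `μ`-width of a hypergraph: minimum `μ`-width over tree decompositions. -/
def muWidth (H : Hypergraph' V) (μ : V → ℝ) : ℝ :=
  sInf {w | ∃ td : H.TreeDecomp, td.muWidth μ = w}

/-- The adaptive width `aw(H)`: supremum of the `μ`-widths over fractional
independent sets `μ`. -/
def adaptiveWidth (H : Hypergraph' V) : ℝ :=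
  sSup {w | ∃ μ : V → ℝ, H.IsFracIndep μ ∧ H.muWidth μ = w}

/-- The fractional hypertreewidth `fhtw(H)`. -/
def fhtw (H : Hypergraph' V) : ℝ :=
  sInf {w | ∃ td : H.TreeDecomp, (⨆ t, H.fracCoverOf (td.bag t)) = w}

/-- Add a new vertex `v'` to the hypergraph and replace the hyperedge `e` by `e ∪ {v'}`. -/
def extendEdge (H : Hypergraph' V) (e : Set V) (he : e ∈ H.edges) (v' : V) :
    Hypergraph' V where
  verts := insert v' H.verts
  edges := (H.edges \ {e}) ∪ {insert v' e}
  edge_nonempty := by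
    rintro f (⟨hf, -⟩ | hf)
    · exact H.edge_nonempty f hf
    · rw [Set.mem_singleton_iff] at hf; subst hf; exact ⟨v', Set.mem_insert _ _⟩
  edge_subset := by
    rintro f (⟨hf, -⟩ | hf)
    · exact (H.edge_subset f hf).trans (Set.subset_insert _ _)
    · rw [Set.mem_singleton_iff] at hf; subst hf
      exact Set.insert_subset_insert (H.edge_subset e he)

end Hypergraph'

/-! ### Digraphs -/

namespace Digraph

variable {V A B : Type}

/-- `u` reaches `v` by a directed path (possibly of length 0). -/
def Reaches (G : Digraph V) (u v : V) : Prop := Relation.ReflTransGen G.Adj u v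

/-- `R(u)`: the set of vertices reachable from `u` (including `u`). -/
def reachSet (G : Digraph V) (u : V) : Set V := {v | G.Reaches u v}

/-- The setoid whose classes are the strongly connected components. -/
def sccSetoid (G : Digraph V) : Setoid V where
  r u v := G.Reaches u v ∧ G.Reaches v u
  iseqv := ⟨fun _ => ⟨.refl, .refl⟩, fun h => ⟨h.2, h.1⟩,
    fun h₁ h₂ => ⟨h₁.1.trans h₂.1, h₂.2.trans h₁.2⟩⟩

/-- The condensation `H/∼`: the loop-free DAG obtained by contracting each strongly
connected component to a single vertex. -/
def cond (G : Digraph V) : Digraph (Quotient G.sccSetoid) where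
  Adj X Y := X ≠ Y ∧ ∃ a b, Quotient.mk G.sccSetoid a = X ∧
    Quotient.mk G.sccSetoid b = Y ∧ G.Adj a b

/-- `v` lies in a source component: its strongly connected component is not
reachable from any other component. -/
def InSourceComp (G : Digraph V) (v : V) : Prop := ∀ u, G.Reaches u v → G.Reaches v u

/-- `v` is a source: a vertex of in-degree `0`. -/
def IsSrc (G : Digraph V) (v : V) : Prop := ∀ u, ¬ G.Adj u v

/-- The reachability hypergraph `R(H)` of a digraph: vertices `V(H)`, one hyperedge
`R(s)` for each (representative `s` of a) source component. -/
def reachHyp (G : Digraph V) : Hypergraph' V where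
  verts := Set.univ
  edges := {e | ∃ s, G.InSourceComp s ∧ e = G.reachSet s}
  edge_nonempty := by rintro e ⟨s, -, rfl⟩; exact ⟨s, Relation.ReflTransGen.refl⟩
  edge_subset := fun e _ => Set.subset_univ e

/-- The contour `Γ(H)` of a digraph: the reachability hypergraph with all vertices of
source components deleted (empty hyperedges discarded). -/
def contour (G : Digraph V) : Hypergraph' V where
  verts := {v | ¬ G.InSourceComp v}
  edges := {e | (∃ s, G.InSourceComp s ∧
    e = G.reachSet s \ {v | G.InSourceComp v}) ∧ e.Nonempty}
  edge_nonempty := fun _ he => he.2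
  edge_subset := by rintro e ⟨⟨s, -, rfl⟩, -⟩ v hv; exact hv.2

/-- The reachability hypergraph of a DAG: one hyperedge `R(s)` for each in-degree `0`
vertex `s`. -/
def dagReachHyp (G : Digraph V) : Hypergraph' V where
  verts := Set.univ
  edges := {e | ∃ s, G.IsSrc s ∧ e = G.reachSet s}
  edge_nonempty := by rintro e ⟨s, -, rfl⟩; exact ⟨s, Relation.ReflTransGen.refl⟩
  edge_subset := fun e _ => Set.subset_univ e

/-- The contour of a DAG: the reachability hypergraph with all sources deleted. -/
def dagContour (G : Digraph V) : Hypergraph' V where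
  verts := {v | ¬ G.IsSrc v}
  edges := {e | (∃ s, G.IsSrc s ∧ e = G.reachSet s \ {v | G.IsSrc v}) ∧ e.Nonempty}
  edge_nonempty := fun _ he => he.2
  edge_subset := by rintro e ⟨⟨s, -, rfl⟩, -⟩ v hv; exact hv.2

/-- A homomorphism of digraphs: a map preserving arcs. -/
def IsHom (H : Digraph A) (G : Digraph B) (φ : A → B) : Prop :=
  ∀ ⦃u v⦄, H.Adj u v → G.Adj (φ u) (φ v)

/-- The tensor product of digraphs. -/
def tensor (G : Digraph A) (F : Digraph B) : Digraph (A × B) where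
  Adj x y := G.Adj x.1 y.1 ∧ F.Adj x.2 y.2

/-- The induced subdigraph on a set of vertices. -/
def induce (G : Digraph A) (S : Set A) : Digraph S where
  Adj a b := G.Adj a.1 b.1

/-- The quotient digraph `H/σ` of a digraph by a partition (setoid) of its vertices. -/
def quot (H : Digraph A) (σ : Setoid A) : Digraph (Quotient σ) where
  Adj X Y := ∃ a b, Quotient.mk σ a = X ∧ Quotient.mk σ b = Y ∧ H.Adj a b

/-- A loop-free digraph. -/
def LoopFree (H : Digraph A) : Prop := ∀ v, ¬ H.Adj v v

/-- A digraph without directed cycles (in particular, without loops). -/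
def IsAcyclic (H : Digraph A) : Prop := ∀ u v, H.Adj u v → ¬ H.Reaches v u

/-- A canonical DAG: a DAG in which every vertex has in-degree 0 or out-degree 0. -/
def IsCanonicalDAG (H : Digraph A) : Prop :=
  H.IsAcyclic ∧ ∀ v, (∀ u, ¬ H.Adj u v) ∨ (∀ u, ¬ H.Adj v u)

/-- `t` lies in a sink component: from its strongly connected component no other
component is reachable. -/
def IsSinkVert (H : Digraph A) (t : A) : Prop := ∀ v, H.Reaches t v → H.Reaches v t

/-- Sink deletion: delete all vertices of the strongly connected component of `t`. -/
def sinkDelete (H : Digraph A) (t : A) :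
    Digraph {v : A // ¬ (H.Reaches v t ∧ H.Reaches t v)} where
  Adj a b := H.Adj a.1 b.1

/-- Loop deletion: delete the loop at `u`. -/
def deleteLoop (H : Digraph A) (u : A) : Digraph A where
  Adj a b := H.Adj a b ∧ ¬(a = u ∧ b = u)

/-- The number of sources (in-degree `0` vertices) of the condensation `H/∼`. -/
def numSources (H : Digraph A) : ℕ :=
  {X : Quotient H.sccSetoid | ∀ Y, ¬ H.cond.Adj Y X}.ncard

end Digraph

/-- The number of homomorphisms from `H` to `G`. -/
def homCount {A B : Type} (H : Digraph A) (G : Digraph B) : ℕ :=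
  Nat.card {φ : A → B // H.IsHom G φ}

/-- Two digraphs are isomorphic: a bijection of the vertex sets preserving arcs in
both directions. -/
def DigraphIso {A B : Type} (H : Digraph A) (G : Digraph B) : Prop :=
  ∃ e : A ≃ B, ∀ u v, H.Adj u v ↔ G.Adj (e u) (e v)

/-- The number of subgraphs of `G` (pairs of a vertex subset and an arc subset of `G`
among those vertices) that are isomorphic to `H`. -/
def subCount {A B : Type} (H : Digraph A) (G : Digraph B) : ℕ :=
  Nat.card {p : Set B × (B → B → Prop) //
    (∀ a b, p.2 a b → a ∈ p.1 ∧ b ∈ p.1 ∧ G.Adj a b) ∧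
    DigraphIso H (Digraph.mk fun (a b : p.1) => p.2 a b)}

/-- The number of vertex subsets of `G` inducing a subgraph isomorphic to `H`. -/
def indSubCount {A B : Type} (H : Digraph A) (G : Digraph B) : ℕ :=
  Nat.card {S : Set B // DigraphIso H (G.induce S)}

/-- `H'` is an arc supergraph of the loop-free digraph `H`: a loop-free digraph on the
same vertex set whose arc set contains that of `H`. -/
def ArcSupergraph {A : Type} (H H' : Digraph A) : Prop :=
  H'.LoopFree ∧ ∀ u v, H.Adj u v → H'.Adj u v

/-- The setoid identifying exactly `u` and `v`. -/
def pairSetoid {A : Type} (u v : A) : Setoid A where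
  r a b := a = b ∨ (a ∈ ({u, v} : Set A) ∧ b ∈ ({u, v} : Set A))
  iseqv := by
    refine ⟨fun _ => Or.inl rfl, ?_, ?_⟩
    · rintro a b (rfl | ⟨h₁, h₂⟩)
      · exact Or.inl rfl
      · exact Or.inr ⟨h₂, h₁⟩
    · rintro a b c (rfl | ⟨h₁, h₂⟩) h
      · exact h
      · rcases h with rfl | ⟨h₃, h₄⟩
        · exact Or.inr ⟨h₁, h₂⟩
        · exact Or.inr ⟨h₁, h₄⟩

/-- Arc contraction: identify the endpoints of the arc `(u,v)`; arcs between `u` and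
`v` do not yield a loop. -/
def Digraph.contractArc {A : Type} (H : Digraph A) (u v : A) :
    Digraph (Quotient (pairSetoid u v)) where
  Adj X Y := ∃ a b, Quotient.mk (pairSetoid u v) a = X ∧ Quotient.mk (pairSetoid u v) b = Y ∧
    H.Adj a b ∧ ¬(a ≠ b ∧ a ∈ ({u, v} : Set A) ∧ b ∈ ({u, v} : Set A))

/-- `MRMinor M H`: `M` is a monotone reversible minor of `H`, i.e. `M` can be
obtained (up to isomorphism) from `H` by a finite sequence of sink deletions,
arc contractions, and loop deletions. -/
inductive MRMinor : ∀ {A : Type}, Digraph A → ∀ {B : Type}, Digraph B → Prop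
  | of_iso {A B : Type} {M : Digraph A} {H : Digraph B} :
      DigraphIso M H → MRMinor M H
  | sink_del {A B : Type} {M : Digraph A} {H : Digraph B} (t : B) :
      H.IsSinkVert t → MRMinor M (H.sinkDelete t) → MRMinor M H
  | contract {A B : Type} {M : Digraph A} {H : Digraph B} (u v : B) :
      H.Adj u v → MRMinor M (H.contractArc u v) → MRMinor M H
  | loop_del {A B : Type} {M : Digraph A} {H : Digraph B} (u : B) :
      H.Adj u u → MRMinor M (H.deleteLoop u) → MRMinor M H

/-- `SinkDelSeq H F`: `F` is obtained from `H` by a finite sequence of sink deletions. -/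
inductive SinkDelSeq : ∀ {A : Type}, Digraph A → ∀ {B : Type}, Digraph B → Prop
  | refl {A : Type} (H : Digraph A) : SinkDelSeq H H
  | step {A : Type} {H : Digraph A} (t : A) {B : Type} {F : Digraph B} :
      H.IsSinkVert t → SinkDelSeq (H.sinkDelete t) F → SinkDelSeq H F

/-- The directed split of an undirected graph `F`: vertices `V(F) ⊕ E(F)`, with arcs
from each edge `e = {u,v}` to `u` and to `v`. -/
def dsplit {α : Type} (F : SimpleGraph α) : Digraph (α ⊕ F.edgeSet) where
  Adj x y :=
    match x, y with
    | Sum.inr e, Sum.inl u => u ∈ e.1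
    | _, _ => False

/-- `D` has an induced matching gadget of size `k`: arcs `(s i, w i)` with the `w i`
pairwise distinct such that no source of `D` reaches two distinct `w i`. -/
def HasIMG {A : Type} (D : Digraph A) (k : ℕ) : Prop :=
  ∃ s w : Fin k → A, (∀ i, D.Adj (s i) (w i)) ∧ Function.Injective w ∧
    ∀ x, D.IsSrc x → ∀ i j, D.Reaches x (w i) → D.Reaches x (w j) → i = j

/-- The maximum size of an induced matching gadget of `D`. -/
def imgNum {A : Type} (D : Digraph A) : ℕ := sSup {k | HasIMG D k}

/-- A fractional cover of a DAG `D`: nonnegative weights on the sources such that each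
non-source is covered with total weight at least 1; the total weight is at least 1. -/
def Digraph.IsFracCover {A : Type} (D : Digraph A) (ψ : A → ℝ) : Prop :=
  (∀ s, 0 ≤ ψ s) ∧ (∀ s, ¬ D.IsSrc s → ψ s = 0) ∧
    (∀ v, ¬ D.IsSrc v → 1 ≤ ∑ᶠ s ∈ {s | D.IsSrc s ∧ v ∈ D.reachSet s}, ψ s) ∧
    1 ≤ ∑ᶠ s ∈ {s | D.IsSrc s}, ψ s

/-- The fractional cover number of a DAG: the minimum weight of a fractional cover. -/
def Digraph.dagFracCoverNum {A : Type} (D : Digraph A) : ℝ :=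
  sInf {w | ∃ ψ : A → ℝ, D.IsFracCover ψ ∧ (∑ᶠ s ∈ {s | D.IsSrc s}, ψ s) = w}

/-- The fractional cover number `ρ*(H)` of a digraph: the fractional cover number of
its condensation. -/
def Digraph.fracCoverNum {A : Type} (G : Digraph A) : ℝ := G.cond.dagFracCoverNum

namespace Digraph

variable {U V W : Type}

theorem IsHom.reaches {G : Digraph V} {G' : Digraph W} {φ : V → W} (hφ : G.IsHom G' φ)
    {u v : V} (h : G.Reaches u v) : G'.Reaches (φ u) (φ v) :=
  Relation.ReflTransGen.lift φ (fun _ _ hab => hφ hab) _ _ h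

theorem IsHom.comp {G : Digraph U} {G' : Digraph V} {G'' : Digraph W} {φ : U → V}
    {ψ : V → W} (hφ : G.IsHom G' φ) (hψ : G'.IsHom G'' ψ) : G.IsHom G'' (ψ ∘ φ) :=
  fun _ _ huv => hψ (hφ huv)

theorem isHom_id_of_arcSupergraph {H A : Digraph V} (hA : ArcSupergraph H A) :
    H.IsHom A id :=
  fun u v huv => hA.2 u v huv

theorem isHom_quot_mk (G : Digraph V) (σ : Setoid V) : G.IsHom (G.quot σ) (Quotient.mk σ) :=
  fun u v huv => ⟨u, v, rfl, rfl, huv⟩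

theorem reachSet_eq_of_reaches {G : Digraph V} {u v : V} (huv : G.Reaches u v)
    (hvu : G.Reaches v u) : G.reachSet u = G.reachSet v :=
  Set.ext fun _ => ⟨hvu.trans, huv.trans⟩

theorem InSourceComp.reachSet_eq {G : Digraph V} {u v : V} (hv : G.InSourceComp v)
    (huv : G.Reaches u v) : G.reachSet u = G.reachSet v :=
  reachSet_eq_of_reaches huv (hv u huv)

theorem InSourceComp.not_cond_adj {G : Digraph V} {u : V} (hu : G.InSourceComp u)
    (Y : Quotient G.sccSetoid) : ¬ G.cond.Adj Y (Quotient.mk G.sccSetoid u) := by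
  rintro ⟨hne, a, b, rfl, hb, hab⟩
  have hau : G.Reaches a u := Relation.ReflTransGen.head hab (Quotient.exact hb).1
  exact hne (Quotient.sound ⟨hau, hu a hau⟩)

/-- A vertex `u` reaching `a` whose reachable set is maximal for inclusion lies in a
source component. -/
theorem exists_inSourceComp_reaches [Finite V] (G : Digraph V) (a : V) :
    ∃ u, G.InSourceComp u ∧ G.Reaches u a := by
  obtain ⟨u, hua, hmax⟩ := Set.Finite.exists_maximalFor G.reachSet {u | G.Reaches u a}
    (Set.toFinite _) ⟨a, .refl⟩
  refine ⟨u, fun w hwu => ?_, hua⟩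
  have hsub : G.reachSet u ⊆ G.reachSet w := fun _ hx => hwu.trans hx
  exact hmax (hwu.trans hua) hsub (Relation.ReflTransGen.refl : G.Reaches w w)

/-- Homomorphisms preserve reachability, so a hyperedge `R(φ a)` of `R(G')` equals `R(φ s)`
for any `s` in a source component of `G` reaching `a`: sending each source `X` of `G/∼` to
`R(φ X.out)` covers all hyperedges. -/
theorem ncard_reachHyp_edges_le_numSources [Finite V] {G : Digraph V} {G' : Digraph W}
    {φ : V → W} (hφ : G.IsHom G' φ) (hsurj : Function.Surjective φ) :
    G'.reachHyp.edges.ncard ≤ G.numSources := by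
  set sources := {X : Quotient G.sccSetoid | ∀ Y, ¬ G.cond.Adj Y X}
  have hcover : G'.reachHyp.edges ⊆ (fun X => G'.reachSet (φ X.out)) '' sources := by
    rintro e ⟨x, hx, rfl⟩
    obtain ⟨a, rfl⟩ := hsurj x
    obtain ⟨u, hu, hua⟩ := G.exists_inSourceComp_reaches a
    have hout : G.Reaches (Quotient.mk G.sccSetoid u).out u :=
      (Quotient.exact (Quotient.out_eq (Quotient.mk G.sccSetoid u))).1
    exact ⟨_, hu.not_cond_adj, hx.reachSet_eq (hφ.reaches (hout.trans hua))⟩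
  calc G'.reachHyp.edges.ncard ≤ ((fun X => G'.reachSet (φ X.out)) '' sources).ncard :=
        Set.ncard_le_ncard hcover
    _ ≤ sources.ncard := Set.ncard_image_le

end Digraph

theorem stmt19_general {V : Type} [Fintype V] (H : Digraph V)
    (c : ℕ) (hs : H.numSources ≤ c) (A : Digraph V) (hA : ArcSupergraph H A)
    (σ : Setoid V) :
    (A.quot σ).reachHyp.edges.ncard ≤ c :=
  calc (A.quot σ).reachHyp.edges.ncard ≤ H.numSources :=
        Digraph.ncard_reachHyp_edges_le_numSources
          ((Digraph.isHom_id_of_arcSupergraph hA).comp (A.isHom_quot_mk σ))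
          Quotient.mk_surjective
    _ ≤ c := hs

theorem stmt19 {V : Type} [Fintype V] (H : Digraph V) (hH : H.LoopFree)
    (c : ℕ) (hs : H.numSources ≤ c) (A : Digraph V) (hA : ArcSupergraph H A)
    (σ : Setoid V) :
    (A.quot σ).reachHyp.edges.ncard ≤ c :=
  stmt19_general H c hs A hA σ

end
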